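/- Let z ∈ [−1, 1] and take the five-point scheme with the fourth-order Strang parameters σ = z(1 − z²)/6 and τ = −z²(1 − z²)/24. If Φ : ℤ → ℝ is square-summable, then the sequence Ψ with Ψ_j := (A(z)Φ)_j is square-summable and ∑_{j∈ℤ} Ψ_j² ≤ ∑_{j∈ℤ} Φ_j²; that is, the fourth-order Strang scheme is a contraction on ℓ²(ℤ). -/
import Mathlib


/-- Backward difference `(DΦ)_j = Φ_j - Φ_{j-1}`. -/
noncomputable def Dd (Φ : ℤ → ℝ) (j : ℤ) : ℝ := Φ j - Φ (j - 1)

/-- Centered difference `(D₀Φ)_j = (Φ_{j+1} - Φ_{j-1})/2`. -/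
noncomputable def D0 (Φ : ℤ → ℝ) (j : ℤ) : ℝ := (Φ (j + 1) - Φ (j - 1)) / 2

/-- Discrete Laplacian `(ΔΦ)_j = Φ_{j-1} - 2Φ_j + Φ_{j+1}`. -/
noncomputable def Lap (Φ : ℤ → ℝ) (j : ℤ) : ℝ := Φ (j - 1) - 2 * Φ j + Φ (j + 1)

/-- `(DΔΦ)_j = (ΔΦ)_j - (ΔΦ)_{j-1}`. -/
noncomputable def DLap (Φ : ℤ → ℝ) (j : ℤ) : ℝ := Lap Φ j - Lap Φ (j - 1)

/-- `(D₀ΔΦ)_j = (-Φ_{j-2} + 2Φ_{j-1} - 2Φ_{j+1} + Φ_{j+2})/2`. -/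
noncomputable def D0Lap (Φ : ℤ → ℝ) (j : ℤ) : ℝ :=
  (-Φ (j - 2) + 2 * Φ (j - 1) - 2 * Φ (j + 1) + Φ (j + 2)) / 2

/-- `(Δ²Φ)_j = Φ_{j-2} - 4Φ_{j-1} + 6Φ_j - 4Φ_{j+1} + Φ_{j+2}`. -/
noncomputable def Lap2 (Φ : ℤ → ℝ) (j : ℤ) : ℝ :=
  Φ (j - 2) - 4 * Φ (j - 1) + 6 * Φ j - 4 * Φ (j + 1) + Φ (j + 2)

/-- The five point scheme `A(z)Φ = Φ - z D₀Φ + (z²/2) ΔΦ + σ D₀ΔΦ + τ Δ²Φ`. -/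
noncomputable def A5 (z σ τ : ℝ) (Φ : ℤ → ℝ) (j : ℤ) : ℝ :=
  Φ j - z * D0 Φ j + z ^ 2 / 2 * Lap Φ j + σ * D0Lap Φ j + τ * Lap2 Φ j

section Aux
variable (Φ : ℤ → ℝ)

/-- Correlation sums. -/
noncomputable def Tc (r : ℤ) : ℝ := ∑' j : ℤ, Φ j * Φ (j + r)

lemma tsum_shift (f : ℤ → ℝ) (a : ℤ) : ∑' j : ℤ, f (j + a) = ∑' j : ℤ, f j :=
  (Equiv.addRight a).tsum_eq f

lemma summable_shift (f : ℤ → ℝ) (a : ℤ) (h : Summable f) :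
    Summable (fun j : ℤ => f (j + a)) :=
  ((Equiv.addRight a).summable_iff).2 h

variable {Φ}

lemma summable_mul_shift (hΦ : Summable (fun j : ℤ => (Φ j) ^ 2)) (r s : ℤ) :
    Summable (fun j : ℤ => Φ (j + r) * Φ (j + s)) := by
  have h1 : Summable (fun j : ℤ => (Φ (j + r)) ^ 2) := summable_shift (fun j : ℤ => (Φ j)^2) r hΦ
  have h2 : Summable (fun j : ℤ => (Φ (j + s)) ^ 2) := summable_shift (fun j : ℤ => (Φ j)^2) s hΦ
  have hmaj : Summable (fun j : ℤ => ((Φ (j + r)) ^ 2 + (Φ (j + s)) ^ 2) / 2) :=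
    (h1.add h2).div_const 2
  refine Summable.of_abs (hmaj.of_nonneg_of_le (fun j => abs_nonneg _) (fun j => ?_))
  have := abs_mul (Φ (j + r)) (Φ (j + s))
  nlinarith [sq_nonneg (|Φ (j + r)| - |Φ (j + s)|), sq_abs (Φ (j + r)), sq_abs (Φ (j + s)),
    abs_nonneg (Φ (j + r) * Φ (j + s))]

lemma tsum_mul_shift (r s : ℤ) :
    ∑' j : ℤ, Φ (j + r) * Φ (j + s) = Tc Φ (s - r) := by
  have h : ∀ j : ℤ, Φ (j + r) * Φ (j + s)
      = (fun j : ℤ => Φ j * Φ (j + (s - r))) (j + r) := by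
    intro j
    have : j + r + (s - r) = j + s := by ring
    simp [this]
  calc ∑' j : ℤ, Φ (j + r) * Φ (j + s)
      = ∑' j : ℤ, (fun j : ℤ => Φ j * Φ (j + (s - r))) (j + r) := by
        exact tsum_congr h
    _ = ∑' j : ℤ, Φ j * Φ (j + (s - r)) := tsum_shift (fun j : ℤ => Φ j * Φ (j + (s - r))) r
    _ = Tc Φ (s - r) := rfl

lemma Tc_neg (r : ℤ) : Tc Φ (-r) = Tc Φ r := by
  have h1 : ∑' j : ℤ, Φ (j + r) * Φ (j + 0) = Tc Φ (0 - r) := tsum_mul_shift r 0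
  have h2 : ∑' j : ℤ, Φ (j + 0) * Φ (j + r) = Tc Φ (r - 0) := tsum_mul_shift 0 r
  simp only [zero_sub, sub_zero] at h1 h2
  rw [← h1, ← h2]
  exact tsum_congr fun j => mul_comm _ _

/-- Key lemma: ℓ² norm of a five-tap filter in terms of correlations. -/
lemma filter_tsum (hΦ : Summable (fun j : ℤ => (Φ j) ^ 2)) (a b c d e : ℝ) :
    Summable (fun j : ℤ =>
      (a * Φ (j - 2) + b * Φ (j - 1) + c * Φ j + d * Φ (j + 1) + e * Φ (j + 2)) ^ 2) ∧
    ∑' j : ℤ, (a * Φ (j - 2) + b * Φ (j - 1) + c * Φ j + d * Φ (j + 1) + e * Φ (j + 2)) ^ 2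
      = (a^2 + b^2 + c^2 + d^2 + e^2) * Tc Φ 0
        + 2*(a*b + b*c + c*d + d*e) * Tc Φ 1
        + 2*(a*c + b*d + c*e) * Tc Φ 2
        + 2*(a*d + b*e) * Tc Φ 3
        + 2*(a*e) * Tc Φ 4 := by
  set w : Fin 5 → ℝ := ![a, b, c, d, e] with hw
  set ι : Fin 5 → ℤ := ![-2, -1, 0, 1, 2] with hι
  have hF : ∀ j : ℤ,
      (a * Φ (j - 2) + b * Φ (j - 1) + c * Φ j + d * Φ (j + 1) + e * Φ (j + 2)) ^ 2
      = ∑ p : Fin 5 × Fin 5,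
          (w p.1 * w p.2) * (Φ (j + ι p.1) * Φ (j + ι p.2)) := by
    intro j
    rw [Fintype.sum_prod_type]
    simp only [hw, hι, Fin.sum_univ_five, Matrix.cons_val_zero, Matrix.cons_val_one,
      Matrix.head_cons, Matrix.cons_val_two, Matrix.tail_cons, Matrix.cons_val_three,
      Matrix.cons_val_four]
    have e1 : j + (-2 : ℤ) = j - 2 := by ring
    have e2 : j + (-1 : ℤ) = j - 1 := by ring
    have e3 : j + (0 : ℤ) = j := by ring
    rw [e1, e2, e3]
    ring
  have hsumm : ∀ p : Fin 5 × Fin 5,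
      Summable (fun j : ℤ => (w p.1 * w p.2) * (Φ (j + ι p.1) * Φ (j + ι p.2))) :=
    fun p => (summable_mul_shift hΦ (ι p.1) (ι p.2)).mul_left _
  have hS : Summable (fun j : ℤ =>
      (a * Φ (j - 2) + b * Φ (j - 1) + c * Φ j + d * Φ (j + 1) + e * Φ (j + 2)) ^ 2) := by
    refine Summable.congr (summable_sum (s := Finset.univ)
      (f := fun (p : Fin 5 × Fin 5) (j : ℤ) => (w p.1 * w p.2) * (Φ (j + ι p.1) * Φ (j + ι p.2)))
      (fun p _ => hsumm p)) ?_
    intro j; exact (hF j).symm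
  refine ⟨hS, ?_⟩
  have : ∑' j : ℤ, (a * Φ (j - 2) + b * Φ (j - 1) + c * Φ j + d * Φ (j + 1) + e * Φ (j + 2)) ^ 2
      = ∑ p : Fin 5 × Fin 5, ∑' j : ℤ, (w p.1 * w p.2) * (Φ (j + ι p.1) * Φ (j + ι p.2)) := by
    rw [tsum_congr hF]
    exact Summable.tsum_finsetSum (fun p _ => hsumm p)
  rw [this]
  have hval : ∀ p : Fin 5 × Fin 5,
      ∑' j : ℤ, (w p.1 * w p.2) * (Φ (j + ι p.1) * Φ (j + ι p.2))
      = (w p.1 * w p.2) * Tc Φ (ι p.2 - ι p.1) := by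
    intro p
    rw [tsum_mul_left, tsum_mul_shift]
  rw [Finset.sum_congr rfl (fun p _ => hval p)]
  rw [Fintype.sum_prod_type]
  simp only [hw, hι, Fin.sum_univ_five, Matrix.cons_val_zero, Matrix.cons_val_one,
    Matrix.head_cons, Matrix.cons_val_two, Matrix.tail_cons, Matrix.cons_val_three,
    Matrix.cons_val_four]
  norm_num
  have n1 : Tc Φ (-1) = Tc Φ 1 := Tc_neg (Φ:=Φ) 1
  have n2 : Tc Φ (-2) = Tc Φ 2 := Tc_neg (Φ:=Φ) 2
  have n3 : Tc Φ (-3) = Tc Φ 3 := Tc_neg (Φ:=Φ) 3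
  have n4 : Tc Φ (-4) = Tc Φ 4 := Tc_neg (Φ:=Φ) 4
  rw [n1, n2, n3, n4]
  ring

end Aux

set_option maxHeartbeats 2000000 in
/-- The fourth order Strang scheme `σ = z(1 - z²)/6`, `τ = -z²(1 - z²)/24` is a
contraction on `ℓ²(ℤ)` for `z ∈ [-1, 1]`. -/
theorem strang_scheme_contraction (z : ℝ) (hz : z ∈ Set.Icc (-1 : ℝ) 1)
    (Φ : ℤ → ℝ) (hΦ : Summable (fun j : ℤ => (Φ j) ^ 2)) :
    Summable (fun j : ℤ => (A5 z (z * (1 - z ^ 2) / 6) (-(z ^ 2 * (1 - z ^ 2)) / 24) Φ j) ^ 2) ∧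
      ∑' j : ℤ, (A5 z (z * (1 - z ^ 2) / 6) (-(z ^ 2 * (1 - z ^ 2)) / 24) Φ j) ^ 2
        ≤ ∑' j : ℤ, (Φ j) ^ 2 := by
  obtain ⟨hz1, hz2⟩ := hz
  have hzsq : z ^ 2 ≤ 1 := by nlinarith
  set σ : ℝ := z * (1 - z ^ 2) / 6 with hσ
  set τ : ℝ := -(z ^ 2 * (1 - z ^ 2)) / 24 with hτ
  have hA : ∀ j : ℤ, A5 z σ τ Φ j =
      (-σ/2 + τ) * Φ (j - 2) + (z/2 + z^2/2 + σ - 4*τ) * Φ (j - 1)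
        + (1 - z^2 + 6*τ) * Φ j + (-z/2 + z^2/2 - σ - 4*τ) * Φ (j + 1)
        + (σ/2 + τ) * Φ (j + 2) := by
    intro j
    simp only [A5, D0, Lap, D0Lap, Lap2]
    ring
  obtain ⟨hS, hE⟩ := filter_tsum hΦ (-σ/2 + τ) (z/2 + z^2/2 + σ - 4*τ)
    (1 - z^2 + 6*τ) (-z/2 + z^2/2 - σ - 4*τ) (σ/2 + τ)
  obtain ⟨hS1, hE1⟩ := filter_tsum hΦ (-1) 2 0 (-2) 1
  obtain ⟨hS2, hE2⟩ := filter_tsum hΦ 1 (-4) 6 (-4) 1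
  have hcongr : ∀ j : ℤ,
      ((-σ/2 + τ) * Φ (j - 2) + (z/2 + z^2/2 + σ - 4*τ) * Φ (j - 1)
        + (1 - z^2 + 6*τ) * Φ j + (-z/2 + z^2/2 - σ - 4*τ) * Φ (j + 1)
        + (σ/2 + τ) * Φ (j + 2)) ^ 2 = (A5 z σ τ Φ j) ^ 2 := by
    intro j; rw [hA j]
  have hSA : Summable (fun j : ℤ => (A5 z σ τ Φ j) ^ 2) := hS.congr hcongr
  refine ⟨hSA, ?_⟩
  have hT0 : Tc Φ 0 = ∑' j : ℤ, (Φ j) ^ 2 := by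
    unfold Tc
    exact tsum_congr fun j => by rw [add_zero, ← sq]
  have hEA : ∑' j : ℤ, (A5 z σ τ Φ j) ^ 2
      = (((-σ/2 + τ))^2 + (z/2 + z^2/2 + σ - 4*τ)^2 + (1 - z^2 + 6*τ)^2
          + (-z/2 + z^2/2 - σ - 4*τ)^2 + (σ/2 + τ)^2) * Tc Φ 0
        + 2*((-σ/2 + τ)*(z/2 + z^2/2 + σ - 4*τ) + (z/2 + z^2/2 + σ - 4*τ)*(1 - z^2 + 6*τ)
            + (1 - z^2 + 6*τ)*(-z/2 + z^2/2 - σ - 4*τ) + (-z/2 + z^2/2 - σ - 4*τ)*(σ/2 + τ)) * Tc Φ 1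
        + 2*((-σ/2 + τ)*(1 - z^2 + 6*τ) + (z/2 + z^2/2 + σ - 4*τ)*(-z/2 + z^2/2 - σ - 4*τ)
            + (1 - z^2 + 6*τ)*(σ/2 + τ)) * Tc Φ 2
        + 2*((-σ/2 + τ)*(-z/2 + z^2/2 - σ - 4*τ) + (z/2 + z^2/2 + σ - 4*τ)*(σ/2 + τ)) * Tc Φ 3
        + 2*((-σ/2 + τ)*(σ/2 + τ)) * Tc Φ 4 := by
    rw [← hE]
    exact (tsum_congr hcongr).symm
  have key : ∑' j : ℤ, (A5 z σ τ Φ j) ^ 2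
      + (z^2*(1-z^2)*(4-z^2)/288) * ∑' j : ℤ,
          ((-1) * Φ (j - 2) + 2 * Φ (j - 1) + 0 * Φ j + (-2) * Φ (j + 1) + 1 * Φ (j + 2)) ^ 2
      + (z^2*(1-z^2)*(3-z^2)*(4-z^2)/576) * ∑' j : ℤ,
          (1 * Φ (j - 2) + (-4) * Φ (j - 1) + 6 * Φ j + (-4) * Φ (j + 1) + 1 * Φ (j + 2)) ^ 2
      = Tc Φ 0 := by
    rw [hEA, hE1, hE2, hσ, hτ]
    ring
  have h1 : (0:ℝ) ≤ 1 - z^2 := by linarith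
  have h3 : (0:ℝ) ≤ 3 - z^2 := by linarith
  have h4 : (0:ℝ) ≤ 4 - z^2 := by linarith
  have hc1 : (0:ℝ) ≤ z^2*(1-z^2)*(4-z^2)/288 := by
    have := mul_nonneg (mul_nonneg (sq_nonneg z) h1) h4
    linarith
  have hc2 : (0:ℝ) ≤ z^2*(1-z^2)*(3-z^2)*(4-z^2)/576 := by
    have := mul_nonneg (mul_nonneg (mul_nonneg (sq_nonneg z) h1) h3) h4
    linarith
  have hQ1 : (0:ℝ) ≤ ∑' j : ℤ,
      ((-1) * Φ (j - 2) + 2 * Φ (j - 1) + 0 * Φ j + (-2) * Φ (j + 1) + 1 * Φ (j + 2)) ^ 2 :=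
    tsum_nonneg fun j => sq_nonneg _
  have hQ2 : (0:ℝ) ≤ ∑' j : ℤ,
      (1 * Φ (j - 2) + (-4) * Φ (j - 1) + 6 * Φ j + (-4) * Φ (j + 1) + 1 * Φ (j + 2)) ^ 2 :=
    tsum_nonneg fun j => sq_nonneg _
  linarith [key, mul_nonneg hc1 hQ1, mul_nonneg hc2 hQ2, hT0]
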